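/- Let A be an associative F-algebra containing a non-zero finite-dimensional semisimple subalgebra S. Suppose that A is generated by S as a two-sided ideal (i.e. the smallest two-sided ideal of A containing S equals A), and that S is 1-perfect if p ≠ 2, or 4-perfect if p = 2. Then A = A^(1)A^(1) + A^(1), where A^(1)A^(1) denotes the linear span of all products xy with x, y ∈ A^(1). -/

import Mathlib

/-!
Put `T = A⁽¹⁾A⁽¹⁾ + A⁽¹⁾` and `S ≅ ∏ Mₙ(F)`. A block with `n = 1` would give a proper ideal
of codimension 1 in `S`, so every diagonal matrix unit `e = e_ii` has a partner `g = e_jj`,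
`j ≠ i`. Then `e c e = (e c e_ij) e_ji` is a product of two commutators, `e a = [e, e a] + e a e`, and
`a e b = u v` with `u = a e_ij`, `v = e_ji b`, `u g = u`, `g v = v`, so that
`u v = [u, g] [g, v] + u v g + g u v - g u v g`. Hence `eA + Ae + AeA ⊆ T`. Summing over the
diagonal units, the same holds for the identity `1_S` of `S`, so the largest ideal of `A` inside
`T` contains `1_S` and therefore `S = 1_S S`; as `S` generates `A`, that ideal is `A`.
-/

universe u v

/-- An `F`-algebra (possibly non-unital) is `k`-perfect if it has no proper two-sided
ideal of codimension at most `k`. -/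
def kPerfect (F : Type u) (A : Type v) [Field F] [NonUnitalRing A] [Module F A]
    (k : ℕ) : Prop :=
  ∀ J : Submodule F A, (∀ a : A, ∀ x ∈ J, a * x ∈ J ∧ x * a ∈ J) → J ≠ ⊤ →
    ¬ (Module.rank F (A ⧸ J) ≤ (k : Cardinal))

/-- A non-unital `F`-algebra is (finite-dimensional) semisimple iff it is isomorphic,
as a non-unital `F`-algebra, to a finite direct sum of full matrix algebras over `F`. -/
def IsMatrixSemisimple (F : Type u) (S : Type v) [Field F] [NonUnitalRing S]
    [Module F S] : Prop :=
  ∃ (m : ℕ) (n : Fin m → ℕ) (_hn : ∀ i, 0 < n i)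
    (f : S →ₙₐ[F] ∀ i, Matrix (Fin (n i)) (Fin (n i)) F), Function.Bijective f

/-- The derived subalgebra `A⁽¹⁾`: the `F`-linear span of all commutators. -/
def derivedSub (F : Type u) (A : Type v) [Field F] [NonUnitalRing A] [Module F A] :
    Submodule F A :=
  Submodule.span F {z : A | ∃ x y : A, z = x * y - y * x}

open Matrix Submodule

section Derived

variable {F : Type u} {A : Type v} [Field F] [NonUnitalRing A] [Module F A]

variable (F A) in
/-- `A⁽¹⁾A⁽¹⁾ + A⁽¹⁾`. -/
def derivedSqSupDerived : Submodule F A :=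
  span F {z : A | ∃ x ∈ derivedSub F A, ∃ y ∈ derivedSub F A, z = x * y} ⊔ derivedSub F A

theorem commutator_mem_derivedSub (x y : A) : x * y - y * x ∈ derivedSub F A :=
  subset_span ⟨x, y, rfl⟩

theorem mem_derivedSub_of_mul_eq_self {x g : A} (h₁ : x * g = x) (h₂ : g * x = 0) :
    x ∈ derivedSub F A := by
  simpa [h₁, h₂] using commutator_mem_derivedSub (F := F) x g

theorem commutator_mem_derivedSqSupDerived (x y : A) :
    x * y - y * x ∈ derivedSqSupDerived F A :=
  mem_sup_right (commutator_mem_derivedSub x y)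

theorem mul_mem_derivedSqSupDerived {x y : A} (hx : x ∈ derivedSub F A)
    (hy : y ∈ derivedSub F A) : x * y ∈ derivedSqSupDerived F A :=
  mem_sup_left (subset_span ⟨x, hx, y, hy, rfl⟩)

theorem IsIdempotentElem.mul_right_mem_derivedSqSupDerived {g : A} (hg : IsIdempotentElem g)
    (hgAg : ∀ c, g * c * g ∈ derivedSqSupDerived F A) (a : A) :
    g * a ∈ derivedSqSupDerived F A := by
  have : g * a = (g * (g * a) - g * a * g) + g * a * g := by rw [← mul_assoc, hg.eq]; abel
  rw [this]
  exact add_mem (commutator_mem_derivedSqSupDerived _ _) (hgAg a)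

theorem IsIdempotentElem.mul_left_mem_derivedSqSupDerived {g : A} (hg : IsIdempotentElem g)
    (hgAg : ∀ c, g * c * g ∈ derivedSqSupDerived F A) (a : A) :
    a * g ∈ derivedSqSupDerived F A := by
  have : a * g = (a * g * g - g * (a * g)) + g * a * g := by
    rw [mul_assoc a, hg.eq, ← mul_assoc]; abel
  rw [this]
  exact add_mem (commutator_mem_derivedSqSupDerived _ _) (hgAg a)

theorem mul_mem_derivedSqSupDerived_of_mul_eq_self {u v g : A} (hu : u * g = u)
    (hv : g * v = v) (hgA : ∀ c, g * c ∈ derivedSqSupDerived F A)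
    (hAg : ∀ c, c * g ∈ derivedSqSupDerived F A) : u * v ∈ derivedSqSupDerived F A := by
  have key : (u * g - g * u) * (g * v - v * g)
      = u * v - u * v * g - g * (u * v) + g * (u * v * g) :=
    calc (u * g - g * u) * (g * v - v * g)
        = (u * g) * (g * v) - (u * g) * v * g - g * u * (g * v) + g * u * v * g := by
          noncomm_ring
      _ = u * v - u * v * g - g * (u * v) + g * (u * v * g) := by
        rw [hu, hv]; simp only [mul_assoc]
  have : u * v = (u * g - g * u) * (g * v - v * g)
      + (u * v * g + g * (u * v) - g * (u * v * g)) := by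
    rw [key]; abel
  rw [this]
  exact add_mem (mul_mem_derivedSqSupDerived (commutator_mem_derivedSub _ _)
    (commutator_mem_derivedSub _ _)) (sub_mem (add_mem (hAg _) (hgA _)) (hgA _))

end Derived

def IsMatrixUnits {A ι : Type*} [Mul A] [Zero A] [DecidableEq ι] (e : ι → ι → A) : Prop :=
  ∀ i j k l, e i j * e k l = if j = k then e i l else 0

namespace IsMatrixUnits

section Mul

variable {A ι : Type*} [Mul A] [Zero A] [DecidableEq ι] {e : ι → ι → A}
  (he : IsMatrixUnits e)
include he

theorem mul_same (i j l : ι) : e i j * e j l = e i l := by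
  simpa using he i j j l

theorem mul_of_ne {i j k l : ι} (h : j ≠ k) : e i j * e k l = 0 := by
  simpa [h] using he i j k l

theorem isIdempotentElem (i : ι) : IsIdempotentElem (e i i) :=
  he.mul_same i i i

end Mul

variable {F : Type u} {A : Type v} [Field F] [NonUnitalRing A] [Module F A]
variable {ι : Type*} [DecidableEq ι] {e : ι → ι → A} (he : IsMatrixUnits e)
include he

theorem mem_derivedSub {i j : ι} (hij : i ≠ j) : e i j ∈ derivedSub F A :=
  mem_derivedSub_of_mul_eq_self (he.mul_same i j j) (he.mul_of_ne hij.symm)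

theorem diag_mul_diag_mem_derivedSqSupDerived {i j : ι} (hij : i ≠ j) (c : A) :
    e i i * c * e i i ∈ derivedSqSupDerived F A := by
  have hcij : e i i * c * e i j ∈ derivedSub F A :=
    mem_derivedSub_of_mul_eq_self (g := e j j) (by rw [mul_assoc, he.mul_same])
      (by rw [← mul_assoc, ← mul_assoc, he.mul_of_ne hij.symm, zero_mul, zero_mul])
  have := mul_mem_derivedSqSupDerived hcij (he.mem_derivedSub hij.symm)
  rwa [mul_assoc _ (e i j), he.mul_same] at this

variable [Nontrivial ι]

theorem diag_mul_mem_derivedSqSupDerived (i : ι) (a : A) :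
    e i i * a ∈ derivedSqSupDerived F A :=
  have ⟨_, hj⟩ := exists_ne i
  (he.isIdempotentElem i).mul_right_mem_derivedSqSupDerived
    (he.diag_mul_diag_mem_derivedSqSupDerived hj.symm) a

theorem mul_diag_mem_derivedSqSupDerived (i : ι) (a : A) :
    a * e i i ∈ derivedSqSupDerived F A :=
  have ⟨_, hj⟩ := exists_ne i
  (he.isIdempotentElem i).mul_left_mem_derivedSqSupDerived
    (he.diag_mul_diag_mem_derivedSqSupDerived hj.symm) a

theorem mul_diag_mul_mem_derivedSqSupDerived (i : ι) (a b : A) :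
    a * e i i * b ∈ derivedSqSupDerived F A := by
  obtain ⟨j, hj⟩ := exists_ne i
  have := mul_mem_derivedSqSupDerived_of_mul_eq_self (F := F) (u := a * e i j) (v := e j i * b)
    (by rw [mul_assoc, he.mul_same]) (by rw [← mul_assoc, he.mul_same])
    (he.diag_mul_mem_derivedSqSupDerived j) (he.mul_diag_mem_derivedSqSupDerived j)
  rwa [mul_assoc a, ← mul_assoc (e i j), he.mul_same, ← mul_assoc] at this

end IsMatrixUnits

section IdealCore

variable {F : Type u} {A : Type v} [Field F] [NonUnitalRing A] [Module F A]
  [SMulCommClass F A A] [IsScalarTower F A A]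

/-- The largest two-sided ideal of `A` contained in `T`. -/
def idealCore (T : Submodule F A) : Submodule F A where
  carrier := {x | x ∈ T ∧ (∀ a, a * x ∈ T) ∧ (∀ a, x * a ∈ T) ∧ ∀ a b, a * x * b ∈ T}
  add_mem' := fun ⟨hx, hax, hxa, haxb⟩ ⟨hy, hay, hya, hayb⟩ =>
    ⟨add_mem hx hy, fun a => by rw [mul_add]; exact add_mem (hax a) (hay a),
      fun a => by rw [add_mul]; exact add_mem (hxa a) (hya a),
      fun a b => by rw [mul_add, add_mul]; exact add_mem (haxb a b) (hayb a b)⟩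
  zero_mem' := by simp
  smul_mem' r x := fun ⟨hx, hax, hxa, haxb⟩ =>
    ⟨T.smul_mem r hx, fun a => by rw [mul_smul_comm]; exact T.smul_mem r (hax a),
      fun a => by rw [smul_mul_assoc]; exact T.smul_mem r (hxa a),
      fun a b => by rw [mul_smul_comm, smul_mul_assoc]; exact T.smul_mem r (haxb a b)⟩

theorem idealCore_le (T : Submodule F A) : idealCore T ≤ T :=
  fun _ hx => hx.1

theorem mul_mem_idealCore (T : Submodule F A) :
    ∀ a : A, ∀ x ∈ idealCore T, a * x ∈ idealCore T ∧ x * a ∈ idealCore T := by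
  rintro a x ⟨-, hcx, hxc, hcxd⟩
  refine ⟨⟨hcx a, fun c => ?_, hcxd a, fun c d => ?_⟩,
    ⟨hxc a, fun c => ?_, fun c => ?_, fun c d => ?_⟩⟩
  · simpa only [mul_assoc] using hcx (c * a)
  · simpa only [mul_assoc] using hcxd (c * a) d
  · simpa only [mul_assoc] using hcxd c a
  · simpa only [mul_assoc] using hxc (a * c)
  · simpa only [mul_assoc] using hcxd c (a * d)

theorem IsMatrixUnits.diag_mem_idealCore {ι : Type*} [DecidableEq ι] [Nontrivial ι]
    {e : ι → ι → A} (he : IsMatrixUnits e) (i : ι) :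
    e i i ∈ idealCore (derivedSqSupDerived F A) :=
  ⟨(he.isIdempotentElem i).eq ▸ he.diag_mul_mem_derivedSqSupDerived i (e i i),
    he.mul_diag_mem_derivedSqSupDerived i, he.diag_mul_mem_derivedSqSupDerived i,
    he.mul_diag_mul_mem_derivedSqSupDerived i⟩

end IdealCore

theorem isMatrixUnits_map_single {ι R A : Type*} {κ : ι → Type*} [DecidableEq ι]
    [∀ b, Fintype (κ b)] [∀ b, DecidableEq (κ b)] [Ring R] [NonUnitalRing A]
    (ψ : (∀ b, Matrix (κ b) (κ b) R) →ₙ+* A) (b : ι) :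
    IsMatrixUnits fun i j => ψ (Pi.single b (single i j 1)) := by
  intro i j k l
  rw [← map_mul, ← Pi.single_mul]
  split_ifs with h
  · rw [h, single_mul_single_same, one_mul]
  · rw [single_mul_single_of_ne (h := h), Pi.single_zero, map_zero]

theorem map_one_mem_idealCore {F : Type u} {A : Type v} [Field F] [NonUnitalRing A]
    [Module F A] [SMulCommClass F A A] [IsScalarTower F A A] {ι R : Type*} [Fintype ι]
    [DecidableEq ι] [Ring R] {n : ι → ℕ} (hn : ∀ b, n b ≠ 1)
    (ψ : (∀ b, Matrix (Fin (n b)) (Fin (n b)) R) →ₙ+* A) :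
    ψ 1 ∈ idealCore (derivedSqSupDerived F A) := by
  have hsum : (1 : ∀ b, Matrix (Fin (n b)) (Fin (n b)) R)
      = ∑ b, ∑ i, Pi.single b (single i i 1) := by
    rw [← Finset.univ_sum_single (1 : ∀ b, Matrix (Fin (n b)) (Fin (n b)) R)]
    refine Finset.sum_congr rfl fun b _ => ?_
    rw [Pi.one_apply, ← sum_single_one]
    exact map_sum (AddMonoidHom.single (fun b => Matrix (Fin (n b)) (Fin (n b)) R) b) _ _
  rw [hsum, map_sum]
  refine sum_mem fun b _ => ?_
  rw [map_sum]
  refine sum_mem fun i _ => ?_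
  have : Nontrivial (Fin (n b)) :=
    Fin.nontrivial_iff_two_le.mpr (by have := hn b; have := i.pos; omega)
  exact (isMatrixUnits_map_single ψ b).diag_mem_idealCore i

section KPerfect

variable {F : Type u} {A : Type v} [Field F] [NonUnitalRing A] [Module F A]

theorem kPerfect.mono {k l : ℕ} (h : kPerfect F A k) (hlk : l ≤ k) : kPerfect F A l :=
  fun J hJ hne hrank => h J hJ hne (hrank.trans (by exact_mod_cast hlk))

theorem kPerfect.lt_finrank_of_surjective {k : ℕ} (h : kPerfect F A k) {B : Type*}
    [NonUnitalRing B] [Module F B] [Nontrivial B] [FiniteDimensional F B]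
    (φ : A →ₙₐ[F] B) (hφ : Function.Surjective φ) : k < Module.finrank F B := by
  set J := LinearMap.ker (φ : A →ₗ[F] B)
  have hJ : ∀ a : A, ∀ x ∈ J, a * x ∈ J ∧ x * a ∈ J := fun a x hx =>
    ⟨by simp [J, map_mul, show φ x = 0 from hx], by simp [J, map_mul, show φ x = 0 from hx]⟩
  have hne : J ≠ ⊤ := by
    obtain ⟨x, hx⟩ := exists_ne (0 : B)
    obtain ⟨a, rfl⟩ := hφ x
    exact fun hJ => hx (show a ∈ J from hJ ▸ Submodule.mem_top)
  by_contra! hle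
  refine h J hJ hne ?_
  let e := (φ : A →ₗ[F] B).quotKerEquivOfSurjective hφ
  have : FiniteDimensional F (A ⧸ J) := e.symm.finiteDimensional
  rw [← Module.finrank_eq_rank, e.finrank_eq]
  exact_mod_cast hle

theorem kPerfect.ne_one_of_surjective_pi_matrix {S : Type v} [NonUnitalRing S] [Module F S]
    (h : kPerfect F S 1) {ι : Type*} {n : ι → ℕ}
    (f : S →ₙₐ[F] ∀ b, Matrix (Fin (n b)) (Fin (n b)) F)
    (hf : Function.Surjective f) (b : ι) : n b ≠ 1 := by
  intro hb
  have : Nonempty (Fin (n b)) := ⟨⟨0, by omega⟩⟩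
  have := h.lt_finrank_of_surjective ((Pi.evalAlgHom F _ b).toNonUnitalAlgHom.comp f)
    ((Function.surjective_eval b).comp hf)
  simp only [Module.finrank_matrix, Fintype.card_fin, Module.finrank_self, hb] at this
  omega

end KPerfect

theorem eq_derived_sq_sup_derived_general
    (F : Type u) [Field F]
    (A : Type v) [NonUnitalRing A] [Module F A] [SMulCommClass F A A] [IsScalarTower F A A]
    (S : NonUnitalSubalgebra F A)
    (hS_ss : IsMatrixSemisimple F S)
    -- `A` is generated by `S` as a two-sided ideal:
    (hgen : ∀ J : Submodule F A, (∀ a : A, ∀ x ∈ J, a * x ∈ J ∧ x * a ∈ J) →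
      (S : Set A) ⊆ J → J = ⊤)
    -- `S` is 1-perfect with `p ≠ 2`, or 4-perfect with `p = 2`:
    (hperf : (ringChar F ≠ 2 ∧ kPerfect F S 1) ∨ (ringChar F = 2 ∧ kPerfect F S 4)) :
    Submodule.span F
        {z : A | ∃ x ∈ derivedSub F A, ∃ y ∈ derivedSub F A, z = x * y}
      ⊔ derivedSub F A = (⊤ : Submodule F A) := by
  obtain ⟨m, n, -, f, hf⟩ := hS_ss
  have hS₁ : kPerfect F S 1 := hperf.elim (·.2) (·.2.mono (by norm_num))
  let ψ : (∀ b, Matrix (Fin (n b)) (Fin (n b)) F) →ₙ+* A :=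
    (NonUnitalSubalgebraClass.subtype S : S →ₙ+* A).comp
      (RingEquiv.ofBijective f hf).symm.toNonUnitalRingHom
  have hψ : ∀ s ∈ S, ψ 1 * s = s := fun s hs => by
    have hs : ψ (f ⟨s, hs⟩) = s :=
      congrArg Subtype.val ((RingEquiv.ofBijective f hf).symm_apply_apply ⟨s, hs⟩)
    rw [← hs, ← map_mul, one_mul]
  have hone : ψ 1 ∈ idealCore (derivedSqSupDerived F A) :=
    map_one_mem_idealCore (hS₁.ne_one_of_surjective_pi_matrix f hf.2) ψ
  have hcore : idealCore (derivedSqSupDerived F A) = ⊤ :=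
    hgen _ (mul_mem_idealCore _) fun s hs => hψ s hs ▸ (mul_mem_idealCore _ s _ hone).2
  exact top_le_iff.mp (hcore ▸ idealCore_le _)

theorem eq_derived_sq_sup_derived
    (F : Type u) [Field F] [IsAlgClosed F]
    (A : Type v) [NonUnitalRing A] [Module F A] [SMulCommClass F A A] [IsScalarTower F A A]
    (S : NonUnitalSubalgebra F A)
    (hS_ne : S ≠ ⊥)
    (hS_ss : IsMatrixSemisimple F S)
    -- `A` is generated by `S` as a two-sided ideal:
    (hgen : ∀ J : Submodule F A, (∀ a : A, ∀ x ∈ J, a * x ∈ J ∧ x * a ∈ J) →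
      (S : Set A) ⊆ J → J = ⊤)
    -- `S` is 1-perfect with `p ≠ 2`, or 4-perfect with `p = 2`:
    (hperf : (ringChar F ≠ 2 ∧ kPerfect F S 1) ∨ (ringChar F = 2 ∧ kPerfect F S 4)) :
    Submodule.span F
        {z : A | ∃ x ∈ derivedSub F A, ∃ y ∈ derivedSub F A, z = x * y}
      ⊔ derivedSub F A = (⊤ : Submodule F A) :=
  eq_derived_sq_sup_derived_general F A S hS_ss hgen hperf
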